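/- Let E, B, G : [0, ∞) × ℝ³ → ℝ³ be smooth functions such that all space–time partial derivatives of E, B, G up to order N lie in L²(ℝ³) in the spatial variable for each fixed t, and suppose the Maxwell equations ∂ₜE − ∇×B = −G and ∂ₜB + ∇×E = 0 hold everywhere. Then for every integer N ≥ 1 there exists a constant C = C(N) > 0 such that for every t ≥ 0: Σ_{|α| = N} ( ‖∂^α E(t)‖²_{L²(ℝ³)} + ‖∂^α B(t)‖²_{L²(ℝ³)} ) ≤ C Σ_{|α'| = N−1} ‖∂^{α'} G(t)‖²_{L²(ℝ³)} + C Σ_{|α| = N, α₀ = 0} ( ‖∂^α E(t)‖²_{L²(ℝ³)} + ‖∂^α B(t)‖²_{L²(ℝ³)} ), where α = (α₀, α₁, α₂, α₃) ranges over space–time multi-indices with α₀ the number of time derivatives, ∂^α = ∂ₜ^{α₀} ∂_{x₁}^{α₁} ∂_{x₂}^{α₂} ∂_{x₃}^{α₃}, and in the sums α' also ranges over space–time multi-indices. -/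

import Mathlib

open MeasureTheory

noncomputable section

/-- Partial derivative of `f : ℝ⁴ → ℝ` along the `i`-th space-time coordinate
(coordinate `0` is time, coordinates `1,2,3` are space). -/
def pd (i : Fin 4) (f : (Fin 4 → ℝ) → ℝ) : (Fin 4 → ℝ) → ℝ :=
  fun z => fderiv ℝ f z (Pi.single i 1)

/-- `n`-fold partial derivative along coordinate `i`. -/
def pdIter (i : Fin 4) : ℕ → ((Fin 4 → ℝ) → ℝ) → ((Fin 4 → ℝ) → ℝ)
  | 0 => id
  | n + 1 => fun f => pd i (pdIter i n f)

/-- The mixed space-time derivative `∂^α = ∂ₜ^{α₀}∂_{x₁}^{α₁}∂_{x₂}^{α₂}∂_{x₃}^{α₃}`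
for a multi-index `α : Fin 4 → ℕ`. -/
def mderiv (α : Fin 4 → ℕ) (f : (Fin 4 → ℝ) → ℝ) : (Fin 4 → ℝ) → ℝ :=
  pdIter 0 (α 0) (pdIter 1 (α 1) (pdIter 2 (α 2) (pdIter 3 (α 3) f)))

/-- Spatial curl of a time-dependent vector field `F : ℝ⁴ → ℝ³`:
`∇×F = (∂₂F₃ − ∂₃F₂, ∂₃F₁ − ∂₁F₃, ∂₁F₂ − ∂₂F₁)` in the spatial variables. -/
def curl3 (F : (Fin 4 → ℝ) → Fin 3 → ℝ) (z : Fin 4 → ℝ) : Fin 3 → ℝ :=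
  ![pd 2 (fun w => F w 2) z - pd 3 (fun w => F w 1) z,
    pd 3 (fun w => F w 0) z - pd 1 (fun w => F w 2) z,
    pd 1 (fun w => F w 1) z - pd 2 (fun w => F w 0) z]

set_option linter.unusedSectionVars false
set_option linter.unreachableTactic false
set_option linter.unusedTactic false

namespace Stmt19Aux

lemma pd_smooth {f : (Fin 4 → ℝ) → ℝ} (hf : ContDiff ℝ (⊤ : ℕ∞) f) (i : Fin 4) :
    ContDiff ℝ (⊤ : ℕ∞) (pd i f) := by
  unfold pd
  exact (hf.fderiv_right (by simp)).clm_apply contDiff_const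

lemma pd_apply_snd {f : (Fin 4 → ℝ) → ℝ} (hf : ContDiff ℝ (⊤ : ℕ∞) f) (i j : Fin 4) (z : Fin 4 → ℝ) :
    pd i (pd j f) z = fderiv ℝ (fderiv ℝ f) z (Pi.single i 1) (Pi.single j 1) := by
  have hdf : DifferentiableAt ℝ (fderiv ℝ f) z :=
    ((hf.fderiv_right (m := 1) (WithTop.coe_le_coe.2 le_top)).differentiable one_ne_zero).differentiableAt
  have hid : pd j f = fun w =>
      (ContinuousLinearMap.apply ℝ ℝ (Pi.single j (1:ℝ) : Fin 4 → ℝ)) (fderiv ℝ f w) := rfl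
  have := fderiv_comp (𝕜 := ℝ) z
    (ContinuousLinearMap.apply ℝ ℝ (Pi.single j (1:ℝ) : Fin 4 → ℝ)).differentiableAt hdf
  rw [ContinuousLinearMap.fderiv] at this
  show fderiv ℝ (pd j f) z (Pi.single i 1) = _
  rw [hid]
  rw [show (fun w => (ContinuousLinearMap.apply ℝ ℝ (Pi.single j (1:ℝ) : Fin 4 → ℝ)) (fderiv ℝ f w))
      = (ContinuousLinearMap.apply ℝ ℝ (Pi.single j (1:ℝ) : Fin 4 → ℝ)) ∘ (fderiv ℝ f) from rfl]
  rw [this]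
  rfl

lemma pd_pd_comm {f : (Fin 4 → ℝ) → ℝ} (hf : ContDiff ℝ (⊤ : ℕ∞) f) (i j : Fin 4) :
    pd i (pd j f) = pd j (pd i f) := by
  funext z
  have hsym : IsSymmSndFDerivAt ℝ f z := (hf.contDiffAt).isSymmSndFDerivAt (by rw [minSmoothness_of_isRCLikeNormedField]; exact WithTop.coe_le_coe.2 (le_top : (2 : ℕ∞) ≤ ⊤))
  rw [pd_apply_snd hf i j z, pd_apply_snd hf j i z, hsym]

lemma pdIter_smooth {f : (Fin 4 → ℝ) → ℝ} (hf : ContDiff ℝ (⊤ : ℕ∞) f) (i : Fin 4) (n : ℕ) :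
    ContDiff ℝ (⊤ : ℕ∞) (pdIter i n f) := by
  induction n with
  | zero => exact hf
  | succ n ih => exact pd_smooth ih i

lemma mderiv_smooth {f : (Fin 4 → ℝ) → ℝ} (hf : ContDiff ℝ (⊤ : ℕ∞) f) (α : Fin 4 → ℕ) :
    ContDiff ℝ (⊤ : ℕ∞) (mderiv α f) :=
  pdIter_smooth (pdIter_smooth (pdIter_smooth (pdIter_smooth hf 3 _) 2 _) 1 _) 0 _

lemma pd_pdIter {f : (Fin 4 → ℝ) → ℝ} (hf : ContDiff ℝ (⊤ : ℕ∞) f) (i j : Fin 4) (n : ℕ) :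
    pd i (pdIter j n f) = pdIter j n (pd i f) := by
  induction n with
  | zero => rfl
  | succ n ih =>
    show pd i (pd j (pdIter j n f)) = pd j (pdIter j n (pd i f))
    rw [pd_pd_comm (pdIter_smooth hf j n) i j, ih]

lemma pdIter_pdIter_comm {f : (Fin 4 → ℝ) → ℝ} (hf : ContDiff ℝ (⊤ : ℕ∞) f) (i j : Fin 4) (m n : ℕ) :
    pdIter i m (pdIter j n f) = pdIter j n (pdIter i m f) := by
  induction m with
  | zero => rfl
  | succ m ih =>
    show pd i (pdIter i m (pdIter j n f)) = pdIter j n (pd i (pdIter i m f))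
    rw [ih, pd_pdIter (pdIter_smooth hf i m) i j n]

lemma pdIter_add (i : Fin 4) (m n : ℕ) (f : (Fin 4 → ℝ) → ℝ) :
    pdIter i (m + n) f = pdIter i m (pdIter i n f) := by
  induction m with
  | zero => simp [pdIter]
  | succ m ih =>
    have : m + 1 + n = (m + n) + 1 := by omega
    rw [this]
    show pd i (pdIter i (m + n) f) = pd i (pdIter i m (pdIter i n f))
    rw [ih]

lemma mderiv_mderiv {f : (Fin 4 → ℝ) → ℝ} (hf : ContDiff ℝ (⊤ : ℕ∞) f) (β γ : Fin 4 → ℕ) :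
    mderiv β (mderiv γ f) = mderiv (β + γ) f := by
  unfold mderiv
  have s3 : ContDiff ℝ (⊤ : ℕ∞) (pdIter 3 (γ 3) f) := pdIter_smooth hf 3 _
  have s2 : ContDiff ℝ (⊤ : ℕ∞) (pdIter 2 (γ 2) (pdIter 3 (γ 3) f)) := pdIter_smooth s3 2 _
  have s1 : ContDiff ℝ (⊤ : ℕ∞) (pdIter 1 (γ 1) (pdIter 2 (γ 2) (pdIter 3 (γ 3) f))) :=
    pdIter_smooth s2 1 _
  simp only [Pi.add_apply]
  rw [show pdIter 3 (β 3) (pdIter 0 (γ 0) (pdIter 1 (γ 1) (pdIter 2 (γ 2) (pdIter 3 (γ 3) f))))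
      = pdIter 0 (γ 0) (pdIter 1 (γ 1) (pdIter 2 (γ 2) (pdIter 3 (β 3 + γ 3) f))) by
    rw [pdIter_pdIter_comm s1 3 0, pdIter_pdIter_comm s2 3 1, pdIter_pdIter_comm s3 3 2,
      ← pdIter_add]]
  have s3' : ContDiff ℝ (⊤ : ℕ∞) (pdIter 3 (β 3 + γ 3) f) := pdIter_smooth hf 3 _
  have s2' : ContDiff ℝ (⊤ : ℕ∞) (pdIter 2 (γ 2) (pdIter 3 (β 3 + γ 3) f)) := pdIter_smooth s3' 2 _
  rw [show pdIter 2 (β 2) (pdIter 0 (γ 0) (pdIter 1 (γ 1) (pdIter 2 (γ 2) (pdIter 3 (β 3 + γ 3) f))))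
      = pdIter 0 (γ 0) (pdIter 1 (γ 1) (pdIter 2 (β 2 + γ 2) (pdIter 3 (β 3 + γ 3) f))) by
    rw [pdIter_pdIter_comm (pdIter_smooth s2' 1 _) 2 0, pdIter_pdIter_comm s2' 2 1, ← pdIter_add]]
  have s3'' : ContDiff ℝ (⊤ : ℕ∞) (pdIter 3 (β 3 + γ 3) f) := pdIter_smooth hf 3 _
  have s2'' : ContDiff ℝ (⊤ : ℕ∞) (pdIter 2 (β 2 + γ 2) (pdIter 3 (β 3 + γ 3) f)) := pdIter_smooth s3'' 2 _
  rw [show pdIter 1 (β 1) (pdIter 0 (γ 0) (pdIter 1 (γ 1) (pdIter 2 (β 2 + γ 2) (pdIter 3 (β 3 + γ 3) f))))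
      = pdIter 0 (γ 0) (pdIter 1 (β 1 + γ 1) (pdIter 2 (β 2 + γ 2) (pdIter 3 (β 3 + γ 3) f))) by
    rw [pdIter_pdIter_comm (pdIter_smooth s2'' 1 _) 1 0, ← pdIter_add]]
  rw [← pdIter_add]

section lin
variable {ι : Type*}

lemma pd_sum (s : Finset ι) (F : ι → (Fin 4 → ℝ) → ℝ) (hF : ∀ k ∈ s, ContDiff ℝ (⊤ : ℕ∞) (F k))
    (i : Fin 4) : pd i (fun z => ∑ k ∈ s, F k z) = fun z => ∑ k ∈ s, pd i (F k) z := by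
  funext z
  unfold pd
  rw [fderiv_fun_sum (fun k hk => ((hF k hk).differentiable (by simp)).differentiableAt)]
  simp

lemma pd_const_mul (c : ℝ) (f : (Fin 4 → ℝ) → ℝ) (hf : ContDiff ℝ (⊤ : ℕ∞) f) (i : Fin 4) :
    pd i (fun z => c * f z) = fun z => c * pd i f z := by
  funext z
  unfold pd
  rw [fderiv_const_mul ((hf.differentiable (by simp)).differentiableAt)]
  simp

lemma pd_sub (f g : (Fin 4 → ℝ) → ℝ) (hf : ContDiff ℝ (⊤ : ℕ∞) f) (hg : ContDiff ℝ (⊤ : ℕ∞) g) (i : Fin 4) :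
    pd i (fun z => f z - g z) = fun z => pd i f z - pd i g z := by
  funext z
  unfold pd
  rw [fderiv_fun_sub ((hf.differentiable (by simp)).differentiableAt)
    ((hg.differentiable (by simp)).differentiableAt)]
  simp

lemma pdIter_sum (s : Finset ι) (F : ι → (Fin 4 → ℝ) → ℝ) (hF : ∀ k ∈ s, ContDiff ℝ (⊤ : ℕ∞) (F k))
    (i : Fin 4) (n : ℕ) :
    pdIter i n (fun z => ∑ k ∈ s, F k z) = fun z => ∑ k ∈ s, pdIter i n (F k) z := by
  induction n with
  | zero => rfl
  | succ n ih =>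
    show pd i (pdIter i n _) = _
    rw [ih, pd_sum s _ (fun k hk => pdIter_smooth (hF k hk) i n) i]
    rfl

lemma pdIter_const_mul (c : ℝ) (f : (Fin 4 → ℝ) → ℝ) (hf : ContDiff ℝ (⊤ : ℕ∞) f) (i : Fin 4) (n : ℕ) :
    pdIter i n (fun z => c * f z) = fun z => c * pdIter i n f z := by
  induction n with
  | zero => rfl
  | succ n ih =>
    show pd i (pdIter i n _) = _
    rw [ih, pd_const_mul c _ (pdIter_smooth hf i n) i]
    rfl

lemma pdIter_sub (f g : (Fin 4 → ℝ) → ℝ) (hf : ContDiff ℝ (⊤ : ℕ∞) f) (hg : ContDiff ℝ (⊤ : ℕ∞) g)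
    (i : Fin 4) (n : ℕ) :
    pdIter i n (fun z => f z - g z) = fun z => pdIter i n f z - pdIter i n g z := by
  induction n with
  | zero => rfl
  | succ n ih =>
    show pd i (pdIter i n _) = _
    rw [ih, pd_sub _ _ (pdIter_smooth hf i n) (pdIter_smooth hg i n) i]
    rfl

lemma mderiv_sum (s : Finset ι) (F : ι → (Fin 4 → ℝ) → ℝ) (hF : ∀ k ∈ s, ContDiff ℝ (⊤ : ℕ∞) (F k))
    (α : Fin 4 → ℕ) :
    mderiv α (fun z => ∑ k ∈ s, F k z) = fun z => ∑ k ∈ s, mderiv α (F k) z := by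
  unfold mderiv
  rw [pdIter_sum s F hF 3, pdIter_sum s _ (fun k hk => pdIter_smooth (hF k hk) 3 _) 2,
    pdIter_sum s _ (fun k hk => pdIter_smooth (pdIter_smooth (hF k hk) 3 _) 2 _) 1,
    pdIter_sum s _ (fun k hk => pdIter_smooth (pdIter_smooth (pdIter_smooth (hF k hk) 3 _) 2 _) 1 _) 0]

lemma mderiv_const_mul (c : ℝ) (f : (Fin 4 → ℝ) → ℝ) (hf : ContDiff ℝ (⊤ : ℕ∞) f) (α : Fin 4 → ℕ) :
    mderiv α (fun z => c * f z) = fun z => c * mderiv α f z := by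
  unfold mderiv
  rw [pdIter_const_mul c f hf 3, pdIter_const_mul c _ (pdIter_smooth hf 3 _) 2,
    pdIter_const_mul c _ (pdIter_smooth (pdIter_smooth hf 3 _) 2 _) 1,
    pdIter_const_mul c _ (pdIter_smooth (pdIter_smooth (pdIter_smooth hf 3 _) 2 _) 1 _) 0]

lemma mderiv_sub (f g : (Fin 4 → ℝ) → ℝ) (hf : ContDiff ℝ (⊤ : ℕ∞) f) (hg : ContDiff ℝ (⊤ : ℕ∞) g)
    (α : Fin 4 → ℕ) :
    mderiv α (fun z => f z - g z) = fun z => mderiv α f z - mderiv α g z := by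
  unfold mderiv
  rw [pdIter_sub f g hf hg 3,
    pdIter_sub _ _ (pdIter_smooth hf 3 _) (pdIter_smooth hg 3 _) 2,
    pdIter_sub _ _ (pdIter_smooth (pdIter_smooth hf 3 _) 2 _) (pdIter_smooth (pdIter_smooth hg 3 _) 2 _) 1,
    pdIter_sub _ _ (pdIter_smooth (pdIter_smooth (pdIter_smooth hf 3 _) 2 _) 1 _)
      (pdIter_smooth (pdIter_smooth (pdIter_smooth hg 3 _) 2 _) 1 _) 0]

end lin

lemma mderiv_single (i : Fin 4) (f : (Fin 4 → ℝ) → ℝ) :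
    mderiv (Pi.single i 1) f = pd i f := by
  fin_cases i <;> simp [mderiv, Pi.single, Function.update, pdIter]

/-- `∂^γ (∂ᵢ f) = ∂^{γ + eᵢ} f` for smooth `f`. -/
lemma mderiv_pd {f : (Fin 4 → ℝ) → ℝ} (hf : ContDiff ℝ (⊤ : ℕ∞) f) (γ : Fin 4 → ℕ) (i : Fin 4) :
    mderiv γ (pd i f) = mderiv (γ + Pi.single i 1) f := by
  rw [← mderiv_single i f, mderiv_mderiv hf]

/-- `∂₀ (∂^γ f) = ∂^{γ + e₀} f` for smooth `f`. -/
lemma pd_mderiv {f : (Fin 4 → ℝ) → ℝ} (hf : ContDiff ℝ (⊤ : ℕ∞) f) (γ : Fin 4 → ℕ) (i : Fin 4) :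
    pd i (mderiv γ f) = mderiv (γ + Pi.single i 1) f := by
  rw [← mderiv_single i (mderiv γ f), mderiv_mderiv hf,
    show Pi.single i 1 + γ = γ + Pi.single i 1 from add_comm _ _]

section combo
variable {ι : Type*} [DecidableEq ι]

/-- `f` is pointwise a linear combination of the `g i`, `i ∈ S`, with total coefficient mass `≤ M`. -/
def IsCombo (S : Finset ι) (g : ι → (Fin 4 → ℝ) → ℝ) (M : ℝ) (f : (Fin 4 → ℝ) → ℝ) : Prop :=
  ∃ c : ι → ℝ, (∑ i ∈ S, |c i|) ≤ M ∧ ∀ z, f z = ∑ i ∈ S, c i * g i z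

lemma IsCombo.congr {S : Finset ι} {g M f f'} (h : IsCombo S g M f) (hff' : ∀ z, f z = f' z) :
    IsCombo S g M f' := by
  obtain ⟨c, hc, he⟩ := h
  exact ⟨c, hc, fun z => (hff' z) ▸ he z⟩

lemma IsCombo.mono {S : Finset ι} {g M M' f} (h : IsCombo S g M f) (hMM' : M ≤ M') :
    IsCombo S g M' f := by
  obtain ⟨c, hc, he⟩ := h
  exact ⟨c, hc.trans hMM', he⟩

lemma IsCombo.atom {S : Finset ι} {g : ι → (Fin 4 → ℝ) → ℝ} {i : ι} (hi : i ∈ S) :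
    IsCombo S g 1 (g i) := by
  refine ⟨fun j => if j = i then 1 else 0, ?_, fun z => ?_⟩
  · rw [Finset.sum_eq_single i]
    · simp
    · intro b _ hb; simp [hb]
    · intro h; exact absurd hi h
  · rw [Finset.sum_eq_single i]
    · simp
    · intro b _ hb; simp [hb]
    · intro h; exact absurd hi h

lemma IsCombo.add {S : Finset ι} {g M₁ M₂ f₁ f₂} (h₁ : IsCombo S g M₁ f₁)
    (h₂ : IsCombo S g M₂ f₂) : IsCombo S g (M₁ + M₂) (fun z => f₁ z + f₂ z) := by
  obtain ⟨c₁, hc₁, he₁⟩ := h₁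
  obtain ⟨c₂, hc₂, he₂⟩ := h₂
  refine ⟨fun i => c₁ i + c₂ i, ?_, fun z => ?_⟩
  · calc (∑ i ∈ S, |c₁ i + c₂ i|) ≤ ∑ i ∈ S, (|c₁ i| + |c₂ i|) :=
          Finset.sum_le_sum fun i _ => abs_add_le _ _
      _ = (∑ i ∈ S, |c₁ i|) + ∑ i ∈ S, |c₂ i| := Finset.sum_add_distrib
      _ ≤ M₁ + M₂ := add_le_add hc₁ hc₂
  · show f₁ z + f₂ z = _
    rw [he₁ z, he₂ z, ← Finset.sum_add_distrib]
    exact Finset.sum_congr rfl fun i _ => by ring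

lemma IsCombo.neg {S : Finset ι} {g M f} (h : IsCombo S g M f) :
    IsCombo S g M (fun z => -(f z)) := by
  obtain ⟨c, hc, he⟩ := h
  refine ⟨fun i => -(c i), by simpa using hc, fun z => ?_⟩
  show -(f z) = _
  rw [he z, ← Finset.sum_neg_distrib]
  exact Finset.sum_congr rfl fun i _ => by ring

lemma IsCombo.sub {S : Finset ι} {g M₁ M₂ f₁ f₂} (h₁ : IsCombo S g M₁ f₁)
    (h₂ : IsCombo S g M₂ f₂) : IsCombo S g (M₁ + M₂) (fun z => f₁ z - f₂ z) := by
  have := h₁.add h₂.neg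
  exact this.congr (fun z => by ring)

/-- A linear combination of combos is a combo. -/
lemma IsCombo.of_sum {κ : Type*} [DecidableEq κ] {T : Finset κ} {S : Finset ι}
    {g : ι → (Fin 4 → ℝ) → ℝ} {c : κ → ℝ} {h : κ → (Fin 4 → ℝ) → ℝ} {M : κ → ℝ} {f}
    (hcombo : ∀ k ∈ T, IsCombo S g (M k) (h k))
    (hf : ∀ z, f z = ∑ k ∈ T, c k * h k z) :
    IsCombo S g (∑ k ∈ T, |c k| * M k) f := by
  classical
  have hex : ∀ k : κ, ∃ d : ι → ℝ,
      k ∈ T → ((∑ i ∈ S, |d i|) ≤ M k ∧ ∀ z, h k z = ∑ i ∈ S, d i * g i z) := by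
    intro k
    by_cases hk : k ∈ T
    · obtain ⟨d, hd1, hd2⟩ := hcombo k hk
      exact ⟨d, fun _ => ⟨hd1, hd2⟩⟩
    · exact ⟨0, fun h => absurd h hk⟩
  choose d hd using hex
  refine ⟨fun i => ∑ k ∈ T, c k * d k i, ?_, fun z => ?_⟩
  · calc (∑ i ∈ S, |∑ k ∈ T, c k * d k i|)
        ≤ ∑ i ∈ S, ∑ k ∈ T, |c k| * |d k i| := by
          refine Finset.sum_le_sum fun i _ => ?_
          refine (Finset.abs_sum_le_sum_abs _ _).trans ?_
          exact le_of_eq (Finset.sum_congr rfl fun k _ => abs_mul _ _)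
      _ = ∑ k ∈ T, |c k| * ∑ i ∈ S, |d k i| := by
          rw [Finset.sum_comm]
          exact Finset.sum_congr rfl fun k _ => (Finset.mul_sum _ _ _).symm
      _ ≤ ∑ k ∈ T, |c k| * M k :=
          Finset.sum_le_sum fun k hk =>
            mul_le_mul_of_nonneg_left ((hd k hk).1) (abs_nonneg _)
  · rw [hf z]
    calc (∑ k ∈ T, c k * h k z) = ∑ k ∈ T, ∑ i ∈ S, c k * d k i * g i z := by
          refine Finset.sum_congr rfl fun k hk => ?_
          rw [(hd k hk).2 z, Finset.mul_sum]
          exact Finset.sum_congr rfl fun i _ => by ring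
      _ = ∑ i ∈ S, (∑ k ∈ T, c k * d k i) * g i z := by
          rw [Finset.sum_comm]
          exact Finset.sum_congr rfl fun i _ => (Finset.sum_mul _ _ _).symm

end combo

section integ
variable {ι : Type*} [DecidableEq ι]

lemma combo_sq_integral {S : Finset ι} {g : ι → (Fin 4 → ℝ) → ℝ} {M : ℝ}
    {f : (Fin 4 → ℝ) → ℝ} (h : IsCombo S g M f) (hM : 0 ≤ M) (t : ℝ)
    (hf2 : MemLp (fun x : Fin 3 → ℝ => f (Fin.cons t x)) 2 (volume : Measure (Fin 3 → ℝ)))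
    (hg2 : ∀ i ∈ S, MemLp (fun x : Fin 3 → ℝ => g i (Fin.cons t x)) 2
      (volume : Measure (Fin 3 → ℝ))) :
    (∫ x : Fin 3 → ℝ, (f (Fin.cons t x)) ^ 2)
      ≤ M * M * ∑ i ∈ S, ∫ x : Fin 3 → ℝ, (g i (Fin.cons t x)) ^ 2 := by
  obtain ⟨c, hc, he⟩ := h
  have hgint : ∀ i ∈ S, Integrable (fun x : Fin 3 → ℝ => (g i (Fin.cons t x)) ^ 2)
      (volume : Measure (Fin 3 → ℝ)) := fun i hi => (hg2 i hi).integrable_sq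
  have hcnn : ∀ i ∈ S, (0:ℝ) ≤ |c i| := fun i _ => abs_nonneg _
  have hcM : ∀ i ∈ S, |c i| ≤ M := fun i hi =>
    le_trans (Finset.single_le_sum hcnn hi) hc
  have hpt : ∀ x : Fin 3 → ℝ, (f (Fin.cons t x)) ^ 2
      ≤ M * ∑ i ∈ S, |c i| * (g i (Fin.cons t x)) ^ 2 := by
    intro x
    have h1 : |f (Fin.cons t x)| ≤ ∑ i ∈ S, |c i| * |g i (Fin.cons t x)| := by
      rw [he]
      exact (Finset.abs_sum_le_sum_abs _ _).trans
        (le_of_eq (Finset.sum_congr rfl fun i _ => abs_mul _ _))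
    have h2 : (f (Fin.cons t x)) ^ 2 ≤ (∑ i ∈ S, |c i| * |g i (Fin.cons t x)|) ^ 2 := by
      rw [← sq_abs]
      exact pow_le_pow_left₀ (abs_nonneg _) h1 2
    refine h2.trans ?_
    have hcs := Finset.sum_mul_sq_le_sq_mul_sq S (fun i => Real.sqrt |c i|)
      (fun i => Real.sqrt |c i| * |g i (Fin.cons t x)|)
    have he1 : ∀ i ∈ S, Real.sqrt |c i| * (Real.sqrt |c i| * |g i (Fin.cons t x)|)
        = |c i| * |g i (Fin.cons t x)| := by
      intro i _
      rw [← mul_assoc, Real.mul_self_sqrt (abs_nonneg _)]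
    have he2 : ∀ i ∈ S, (Real.sqrt |c i|) ^ 2 = |c i| := fun i _ =>
      Real.sq_sqrt (abs_nonneg _)
    have he3 : ∀ i ∈ S, (Real.sqrt |c i| * |g i (Fin.cons t x)|) ^ 2
        = |c i| * (g i (Fin.cons t x)) ^ 2 := by
      intro i _
      rw [mul_pow, Real.sq_sqrt (abs_nonneg _), sq_abs]
    rw [Finset.sum_congr rfl he1, Finset.sum_congr rfl he2, Finset.sum_congr rfl he3] at hcs
    refine hcs.trans ?_
    refine mul_le_mul_of_nonneg_right hc ?_
    exact Finset.sum_nonneg fun i _ => mul_nonneg (abs_nonneg _) (sq_nonneg _)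
  have hbint : Integrable
      (fun x : Fin 3 → ℝ => M * ∑ i ∈ S, |c i| * (g i (Fin.cons t x)) ^ 2)
      (volume : Measure (Fin 3 → ℝ)) := by
    refine Integrable.const_mul ?_ M
    exact integrable_finset_sum S fun i hi => (hgint i hi).const_mul _
  calc (∫ x : Fin 3 → ℝ, (f (Fin.cons t x)) ^ 2)
      ≤ ∫ x : Fin 3 → ℝ, M * ∑ i ∈ S, |c i| * (g i (Fin.cons t x)) ^ 2 :=
        integral_mono hf2.integrable_sq hbint hpt
    _ = M * ∑ i ∈ S, |c i| * ∫ x : Fin 3 → ℝ, (g i (Fin.cons t x)) ^ 2 := by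
        rw [integral_const_mul, integral_finset_sum S fun i hi => (hgint i hi).const_mul _]
        congr 1
        exact Finset.sum_congr rfl fun i hi => integral_const_mul _ _
    _ ≤ M * ∑ i ∈ S, M * ∫ x : Fin 3 → ℝ, (g i (Fin.cons t x)) ^ 2 := by
        refine mul_le_mul_of_nonneg_left ?_ hM
        refine Finset.sum_le_sum fun i hi => ?_
        exact mul_le_mul_of_nonneg_right (hcM i hi)
          (integral_nonneg fun x => sq_nonneg _)
    _ = M * M * ∑ i ∈ S, ∫ x : Fin 3 → ℝ, (g i (Fin.cons t x)) ^ 2 := by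
        rw [← Finset.mul_sum, mul_assoc]

end integ

section fields

variable (E B G : (Fin 4 → ℝ) → Fin 3 → ℝ)

/-- The three fields, indexed. -/
def fld : Fin 3 → (Fin 4 → ℝ) → Fin 3 → ℝ := ![E, B, G]

@[simp] lemma fld_zero : fld E B G 0 = E := rfl
@[simp] lemma fld_one : fld E B G 1 = B := rfl
@[simp] lemma fld_two : fld E B G 2 = G := rfl

/-- An "atom": a mixed derivative of a component of one of the three fields. -/
def atom (p : Fin 3 × (Fin 4 → ℕ) × Fin 3) : (Fin 4 → ℝ) → ℝ :=
  mderiv p.2.1 (fun z => fld E B G p.1 z p.2.2)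

/-- The pool of atoms at level `k`: spatial derivatives of `E`, `B` of total order `k`,
and all derivatives of `G` of total order `k - 1`. -/
def pool (k : ℕ) : Finset (Fin 3 × (Fin 4 → ℕ) × Fin 3) :=
  (({0, 1} : Finset (Fin 3)) ×ˢ
    (((Finset.Nat.antidiagonalTuple 4 k).filter fun γ => γ 0 = 0) ×ˢ (Finset.univ : Finset (Fin 3))))
  ∪ (({2} : Finset (Fin 3)) ×ˢ ((Finset.Nat.antidiagonalTuple 4 (k - 1)) ×ˢ (Finset.univ : Finset (Fin 3))))

lemma mem_pool_EB {k : ℕ} {a : Fin 3} (ha : a = 0 ∨ a = 1) {γ : Fin 4 → ℕ}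
    (hsum : ∑ i, γ i = k) (h0 : γ 0 = 0) (j : Fin 3) : (a, γ, j) ∈ pool k := by
  apply Finset.mem_union_left
  rw [Finset.mem_product]
  constructor
  · rcases ha with h | h <;> simp [h]
  · rw [Finset.mem_product]
    exact ⟨Finset.mem_filter.2 ⟨Finset.Nat.mem_antidiagonalTuple.2 hsum, h0⟩, Finset.mem_univ _⟩

lemma mem_pool_G {k : ℕ} {γ : Fin 4 → ℕ} (hsum : ∑ i, γ i = k - 1) (j : Fin 3) :
    (2, γ, j) ∈ pool k := by
  apply Finset.mem_union_right
  rw [Finset.mem_product]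
  refine ⟨by simp, ?_⟩
  rw [Finset.mem_product]
  exact ⟨Finset.Nat.mem_antidiagonalTuple.2 hsum, Finset.mem_univ _⟩

lemma mem_pool_elim {k : ℕ} {p : Fin 3 × (Fin 4 → ℕ) × Fin 3} (hp : p ∈ pool k) :
    ((p.1 = 0 ∨ p.1 = 1) ∧ (∑ i, p.2.1 i = k) ∧ p.2.1 0 = 0)
    ∨ (p.1 = 2 ∧ ∑ i, p.2.1 i = k - 1) := by
  rcases Finset.mem_union.1 hp with h | h
  · left
    rw [Finset.mem_product] at h
    obtain ⟨h1, h2⟩ := h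
    rw [Finset.mem_product] at h2
    obtain ⟨h2, _⟩ := h2
    rw [Finset.mem_filter, Finset.Nat.mem_antidiagonalTuple] at h2
    refine ⟨?_, h2.1, h2.2⟩
    simpa using h1
  · right
    rw [Finset.mem_product] at h
    obtain ⟨h1, h2⟩ := h
    rw [Finset.mem_product] at h2
    obtain ⟨h2, _⟩ := h2
    rw [Finset.Nat.mem_antidiagonalTuple] at h2
    exact ⟨by simpa using h1, h2⟩

variable {E B G}

lemma fld_smooth (hEs : ∀ j : Fin 3, ContDiff ℝ (⊤ : ℕ∞) (fun z => E z j))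
    (hBs : ∀ j : Fin 3, ContDiff ℝ (⊤ : ℕ∞) (fun z => B z j))
    (hGs : ∀ j : Fin 3, ContDiff ℝ (⊤ : ℕ∞) (fun z => G z j))
    (a : Fin 3) (j : Fin 3) : ContDiff ℝ (⊤ : ℕ∞) (fun z => fld E B G a z j) := by
  fin_cases a
  · exact hEs j
  · exact hBs j
  · exact hGs j

lemma atom_smooth (hEs : ∀ j : Fin 3, ContDiff ℝ (⊤ : ℕ∞) (fun z => E z j))
    (hBs : ∀ j : Fin 3, ContDiff ℝ (⊤ : ℕ∞) (fun z => B z j))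
    (hGs : ∀ j : Fin 3, ContDiff ℝ (⊤ : ℕ∞) (fun z => G z j))
    (p : Fin 3 × (Fin 4 → ℕ) × Fin 3) : ContDiff ℝ (⊤ : ℕ∞) (atom E B G p) :=
  mderiv_smooth (fld_smooth hEs hBs hGs p.1 p.2.2) _

end fields

section step

variable {E B G : (Fin 4 → ℝ) → Fin 3 → ℝ}
variable (hEs : ∀ j : Fin 3, ContDiff ℝ (⊤ : ℕ∞) (fun z => E z j))
variable (hBs : ∀ j : Fin 3, ContDiff ℝ (⊤ : ℕ∞) (fun z => B z j))
variable (hGs : ∀ j : Fin 3, ContDiff ℝ (⊤ : ℕ∞) (fun z => G z j))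
variable (heq1 : ∀ z : Fin 4 → ℝ, ∀ j : Fin 3,
    pd 0 (fun w => E w j) z - curl3 B z j = -(G z j))
variable (heq2 : ∀ z : Fin 4 → ℝ, ∀ j : Fin 3,
    pd 0 (fun w => B w j) z + curl3 E z j = 0)

lemma sum_add_single (γ : Fin 4 → ℕ) (i : Fin 4) :
    ∑ l, (γ + Pi.single i 1 : Fin 4 → ℕ) l = (∑ l, γ l) + 1 := by
  simp [Finset.sum_add_distrib]

lemma single_apply_zero (i : Fin 4) (hi : i ≠ 0) : (Pi.single i (1 : ℕ) : Fin 4 → ℕ) 0 = 0 := by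
  rw [Pi.single_eq_of_ne]
  exact fun h => hi (by simpa using h.symm)

include hEs hBs hGs heq1 in
lemma pd0_atom_E {m : ℕ} (γ : Fin 4 → ℕ) (hsum : ∑ i, γ i = m) (h0 : γ 0 = 0) (j' : Fin 3) :
    IsCombo (pool (m + 1)) (atom E B G) 3 (pd 0 (mderiv γ (fun z => E z j'))) := by
  have hstep : pd 0 (mderiv γ (fun z => E z j')) = mderiv γ (pd 0 (fun z => E z j')) := by
    rw [pd_mderiv (hEs j') γ 0, mderiv_pd (hEs j') γ 0]
  have hmemG : ∀ j'' : Fin 3, ((2 : Fin 3), γ, j'') ∈ pool (m + 1) :=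
    fun j'' => mem_pool_G (by simpa using hsum) j''
  have hj : j' = 0 ∨ j' = 1 ∨ j' = 2 := by omega
  rcases hj with rfl | rfl | rfl
  ·
    have heqf : pd 0 (fun z => E z 0) = fun z =>
        (pd 2 (fun w => B w 2) z - pd 3 (fun w => B w 1) z) - G z 0 := by
      funext z
      have h := heq1 z 0
      simp [curl3] at h
      linarith
    rw [hstep, heqf,
      mderiv_sub (fun z => pd 2 (fun w => B w 2) z - pd 3 (fun w => B w 1) z)
        (fun z => G z 0)
        ((pd_smooth (hBs 2) 2).sub (pd_smooth (hBs 1) 3)) (hGs 0) γ,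
      mderiv_sub (pd 2 (fun w => B w 2)) (pd 3 (fun w => B w 1))
        (pd_smooth (hBs 2) 2) (pd_smooth (hBs 1) 3) γ,
      mderiv_pd (hBs 2) γ 2, mderiv_pd (hBs 1) γ 3]
    have m1 : ((1 : Fin 3), γ + Pi.single 2 1, (2 : Fin 3)) ∈ pool (m + 1) :=
      mem_pool_EB (Or.inr rfl) (by rw [sum_add_single, hsum])
        (by simp [h0, single_apply_zero]) _
    have m2 : ((1 : Fin 3), γ + Pi.single 3 1, (1 : Fin 3)) ∈ pool (m + 1) :=
      mem_pool_EB (Or.inr rfl) (by rw [sum_add_single, hsum])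
        (by simp [h0, single_apply_zero]) _
    exact ((((IsCombo.atom (g := atom E B G) m1).sub (IsCombo.atom m2)).sub
      (IsCombo.atom (hmemG _)))).mono (by norm_num)
  · have heqf : pd 0 (fun z => E z 1) = fun z =>
        (pd 3 (fun w => B w 0) z - pd 1 (fun w => B w 2) z) - G z 1 := by
      funext z
      have h := heq1 z 1
      simp [curl3] at h
      linarith
    rw [hstep, heqf,
      mderiv_sub (fun z => pd 3 (fun w => B w 0) z - pd 1 (fun w => B w 2) z)
        (fun z => G z 1)
        ((pd_smooth (hBs 0) 3).sub (pd_smooth (hBs 2) 1)) (hGs 1) γ,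
      mderiv_sub (pd 3 (fun w => B w 0)) (pd 1 (fun w => B w 2))
        (pd_smooth (hBs 0) 3) (pd_smooth (hBs 2) 1) γ,
      mderiv_pd (hBs 0) γ 3, mderiv_pd (hBs 2) γ 1]
    have m1 : ((1 : Fin 3), γ + Pi.single 3 1, (0 : Fin 3)) ∈ pool (m + 1) :=
      mem_pool_EB (Or.inr rfl) (by rw [sum_add_single, hsum])
        (by simp [h0, single_apply_zero]) _
    have m2 : ((1 : Fin 3), γ + Pi.single 1 1, (2 : Fin 3)) ∈ pool (m + 1) :=
      mem_pool_EB (Or.inr rfl) (by rw [sum_add_single, hsum])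
        (by simp [h0, single_apply_zero]) _
    exact ((((IsCombo.atom (g := atom E B G) m1).sub (IsCombo.atom m2)).sub
      (IsCombo.atom (hmemG _)))).mono (by norm_num)
  · have heqf : pd 0 (fun z => E z 2) = fun z =>
        (pd 1 (fun w => B w 1) z - pd 2 (fun w => B w 0) z) - G z 2 := by
      funext z
      have h := heq1 z 2
      simp [curl3] at h
      linarith
    rw [hstep, heqf,
      mderiv_sub (fun z => pd 1 (fun w => B w 1) z - pd 2 (fun w => B w 0) z)
        (fun z => G z 2)
        ((pd_smooth (hBs 1) 1).sub (pd_smooth (hBs 0) 2)) (hGs 2) γ,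
      mderiv_sub (pd 1 (fun w => B w 1)) (pd 2 (fun w => B w 0))
        (pd_smooth (hBs 1) 1) (pd_smooth (hBs 0) 2) γ,
      mderiv_pd (hBs 1) γ 1, mderiv_pd (hBs 0) γ 2]
    have m1 : ((1 : Fin 3), γ + Pi.single 1 1, (1 : Fin 3)) ∈ pool (m + 1) :=
      mem_pool_EB (Or.inr rfl) (by rw [sum_add_single, hsum])
        (by simp [h0, single_apply_zero]) _
    have m2 : ((1 : Fin 3), γ + Pi.single 2 1, (0 : Fin 3)) ∈ pool (m + 1) :=
      mem_pool_EB (Or.inr rfl) (by rw [sum_add_single, hsum])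
        (by simp [h0, single_apply_zero]) _
    exact ((((IsCombo.atom (g := atom E B G) m1).sub (IsCombo.atom m2)).sub
      (IsCombo.atom (hmemG _)))).mono (by norm_num)

include hEs hBs heq2 in
lemma pd0_atom_B {m : ℕ} (γ : Fin 4 → ℕ) (hsum : ∑ i, γ i = m) (h0 : γ 0 = 0) (j' : Fin 3) :
    IsCombo (pool (m + 1)) (atom E B G) 3 (pd 0 (mderiv γ (fun z => B z j'))) := by
  have hstep : pd 0 (mderiv γ (fun z => B z j')) = mderiv γ (pd 0 (fun z => B z j')) := by
    rw [pd_mderiv (hBs j') γ 0, mderiv_pd (hBs j') γ 0]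
  have hj : j' = 0 ∨ j' = 1 ∨ j' = 2 := by omega
  rcases hj with rfl | rfl | rfl
  · have heqf : pd 0 (fun z => B z 0) = fun z =>
        pd 3 (fun w => E w 1) z - pd 2 (fun w => E w 2) z := by
      funext z
      have h := heq2 z 0
      simp [curl3] at h
      linarith
    rw [hstep, heqf,
      mderiv_sub (pd 3 (fun w => E w 1)) (pd 2 (fun w => E w 2))
        (pd_smooth (hEs 1) 3) (pd_smooth (hEs 2) 2) γ,
      mderiv_pd (hEs 1) γ 3, mderiv_pd (hEs 2) γ 2]
    have m1 : ((0 : Fin 3), γ + Pi.single 3 1, (1 : Fin 3)) ∈ pool (m + 1) :=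
      mem_pool_EB (Or.inl rfl) (by rw [sum_add_single, hsum])
        (by simp [h0, single_apply_zero]) _
    have m2 : ((0 : Fin 3), γ + Pi.single 2 1, (2 : Fin 3)) ∈ pool (m + 1) :=
      mem_pool_EB (Or.inl rfl) (by rw [sum_add_single, hsum])
        (by simp [h0, single_apply_zero]) _
    exact (((IsCombo.atom (g := atom E B G) m1).sub (IsCombo.atom m2))).mono (by norm_num)
  · have heqf : pd 0 (fun z => B z 1) = fun z =>
        pd 1 (fun w => E w 2) z - pd 3 (fun w => E w 0) z := by
      funext z
      have h := heq2 z 1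
      simp [curl3] at h
      linarith
    rw [hstep, heqf,
      mderiv_sub (pd 1 (fun w => E w 2)) (pd 3 (fun w => E w 0))
        (pd_smooth (hEs 2) 1) (pd_smooth (hEs 0) 3) γ,
      mderiv_pd (hEs 2) γ 1, mderiv_pd (hEs 0) γ 3]
    have m1 : ((0 : Fin 3), γ + Pi.single 1 1, (2 : Fin 3)) ∈ pool (m + 1) :=
      mem_pool_EB (Or.inl rfl) (by rw [sum_add_single, hsum])
        (by simp [h0, single_apply_zero]) _
    have m2 : ((0 : Fin 3), γ + Pi.single 3 1, (0 : Fin 3)) ∈ pool (m + 1) :=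
      mem_pool_EB (Or.inl rfl) (by rw [sum_add_single, hsum])
        (by simp [h0, single_apply_zero]) _
    exact (((IsCombo.atom (g := atom E B G) m1).sub (IsCombo.atom m2))).mono (by norm_num)
  · have heqf : pd 0 (fun z => B z 2) = fun z =>
        pd 2 (fun w => E w 0) z - pd 1 (fun w => E w 1) z := by
      funext z
      have h := heq2 z 2
      simp [curl3] at h
      linarith
    rw [hstep, heqf,
      mderiv_sub (pd 2 (fun w => E w 0)) (pd 1 (fun w => E w 1))
        (pd_smooth (hEs 0) 2) (pd_smooth (hEs 1) 1) γ,
      mderiv_pd (hEs 0) γ 2, mderiv_pd (hEs 1) γ 1]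
    have m1 : ((0 : Fin 3), γ + Pi.single 2 1, (0 : Fin 3)) ∈ pool (m + 1) :=
      mem_pool_EB (Or.inl rfl) (by rw [sum_add_single, hsum])
        (by simp [h0, single_apply_zero]) _
    have m2 : ((0 : Fin 3), γ + Pi.single 1 1, (1 : Fin 3)) ∈ pool (m + 1) :=
      mem_pool_EB (Or.inl rfl) (by rw [sum_add_single, hsum])
        (by simp [h0, single_apply_zero]) _
    exact (((IsCombo.atom (g := atom E B G) m1).sub (IsCombo.atom m2))).mono (by norm_num)

end step

section key

variable {E B G : (Fin 4 → ℝ) → Fin 3 → ℝ}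
variable (hEs : ∀ j : Fin 3, ContDiff ℝ (⊤ : ℕ∞) (fun z => E z j))
variable (hBs : ∀ j : Fin 3, ContDiff ℝ (⊤ : ℕ∞) (fun z => B z j))
variable (hGs : ∀ j : Fin 3, ContDiff ℝ (⊤ : ℕ∞) (fun z => G z j))
variable (heq1 : ∀ z : Fin 4 → ℝ, ∀ j : Fin 3,
    pd 0 (fun w => E w j) z - curl3 B z j = -(G z j))
variable (heq2 : ∀ z : Fin 4 → ℝ, ∀ j : Fin 3,
    pd 0 (fun w => B w j) z + curl3 E z j = 0)

include hGs in
lemma pd0_atom_G {m : ℕ} (γ : Fin 4 → ℕ) (hsum : ∑ i, γ i = m) (j' : Fin 3) :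
    IsCombo (pool (m + 2)) (atom E B G) 3 (pd 0 (mderiv γ (fun z => G z j'))) := by
  rw [pd_mderiv (hGs j') γ 0]
  refine (IsCombo.atom (g := atom E B G) (mem_pool_G ?_ j')).mono (by norm_num)
  rw [sum_add_single, hsum]
  omega

include hEs hBs hGs heq1 heq2 in
lemma key : ∀ k : ℕ, ∀ j : Fin 3,
    IsCombo (pool (k + 1)) (atom E B G) (3 ^ (k + 1)) (pdIter 0 (k + 1) (fun z => E z j)) ∧
    IsCombo (pool (k + 1)) (atom E B G) (3 ^ (k + 1)) (pdIter 0 (k + 1) (fun z => B z j)) := by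
  intro k
  induction k with
  | zero =>
    intro j
    constructor
    · exact (pd0_atom_E hEs hBs hGs heq1 (0 : Fin 4 → ℕ) (by simp) rfl j).mono (by norm_num)
    · exact (pd0_atom_B hEs hBs heq2 (0 : Fin 4 → ℕ) (by simp) rfl j).mono (by norm_num)
  | succ k ih =>
    intro j
    have hatoms : ∀ p ∈ pool (k + 1),
        IsCombo (pool (k + 2)) (atom E B G) 3 (pd 0 (atom E B G p)) := by
      rintro ⟨a, γ, j'⟩ hp
      rcases mem_pool_elim hp with ⟨ha, hsum, h0⟩ | ⟨ha, hsum⟩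
      · rcases ha with rfl | rfl
        · exact pd0_atom_E hEs hBs hGs heq1 γ hsum h0 j'
        · exact pd0_atom_B hEs hBs heq2 γ hsum h0 j'
      · simp only at ha
        subst ha
        have hsum' : ∑ i, γ i = k := by simpa using hsum
        exact pd0_atom_G hGs γ hsum' j'
    have mass : ∀ c : (Fin 3 × (Fin 4 → ℕ) × Fin 3) → ℝ,
        (∑ p ∈ pool (k + 1), |c p|) ≤ 3 ^ (k + 1) →
        (∑ p ∈ pool (k + 1), |c p| * 3) ≤ 3 ^ (k + 2) := by
      intro c hc
      rw [← Finset.sum_mul]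
      calc (∑ p ∈ pool (k + 1), |c p|) * 3 ≤ 3 ^ (k + 1) * 3 :=
            mul_le_mul_of_nonneg_right hc (by norm_num)
        _ = 3 ^ (k + 2) := by rw [← pow_succ]
    have expand : ∀ (f : (Fin 4 → ℝ) → ℝ) (c : (Fin 3 × (Fin 4 → ℕ) × Fin 3) → ℝ),
        (∀ z, pdIter 0 (k + 1) f z = ∑ p ∈ pool (k + 1), c p * atom E B G p z) →
        ∀ z, pdIter 0 (k + 2) f z = ∑ p ∈ pool (k + 1), c p * pd 0 (atom E B G p) z := by
      intro f c he z
      have h1 : pdIter 0 (k + 2) f = pd 0 (pdIter 0 (k + 1) f) := rfl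
      have h2 : pdIter 0 (k + 1) f = fun z => ∑ p ∈ pool (k + 1), c p * atom E B G p z :=
        funext he
      rw [h1, h2, pd_sum (pool (k + 1)) (fun p => fun z => c p * atom E B G p z)
        (fun p _ => contDiff_const.mul (atom_smooth hEs hBs hGs p)) 0]
      refine Finset.sum_congr rfl fun p _ => ?_
      rw [pd_const_mul (c p) (atom E B G p) (atom_smooth hEs hBs hGs p) 0]
    constructor
    · obtain ⟨c, hc, he⟩ := (ih j).1
      exact (IsCombo.of_sum (M := fun _ => (3:ℝ)) hatoms
        (expand _ c he)).mono (mass c hc)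
    · obtain ⟨c, hc, he⟩ := (ih j).2
      exact (IsCombo.of_sum (M := fun _ => (3:ℝ)) hatoms
        (expand _ c he)).mono (mass c hc)

lemma one_le_3pow {N : ℕ} : (1 : ℝ) ≤ 3 ^ N := by
  calc (1 : ℝ) = 1 ^ N := (one_pow N).symm
    _ ≤ 3 ^ N := pow_le_pow_left₀ (by norm_num) (by norm_num) N

lemma mderiv_single0 (k : ℕ) (f : (Fin 4 → ℝ) → ℝ) :
    mderiv (Pi.single 0 k : Fin 4 → ℕ) f = pdIter 0 k f := by
  unfold mderiv
  rw [show (Pi.single 0 k : Fin 4 → ℕ) 0 = k from Pi.single_eq_same _ _,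
    show (Pi.single 0 k : Fin 4 → ℕ) 1 = 0 from Pi.single_eq_of_ne (by decide) _,
    show (Pi.single 0 k : Fin 4 → ℕ) 2 = 0 from Pi.single_eq_of_ne (by decide) _,
    show (Pi.single 0 k : Fin 4 → ℕ) 3 = 0 from Pi.single_eq_of_ne (by decide) _]
  rfl

include hEs hBs hGs heq1 heq2 in
lemma main_combo (N : ℕ) (hN : 1 ≤ N) :
    ∀ α : Fin 4 → ℕ, (∑ i, α i) = N → ∀ j : Fin 3,
    IsCombo (pool N) (atom E B G) (3 ^ N) (mderiv α (fun z => E z j)) ∧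
    IsCombo (pool N) (atom E B G) (3 ^ N) (mderiv α (fun z => B z j)) := by
  intro α hα j
  have hkN : α 0 ≤ N := by rw [← hα, Fin.sum_univ_four]; omega
  set β : Fin 4 → ℕ := fun i => if i = 0 then 0 else α i with hβ
  have hβ0 : β 0 = 0 := rfl
  have e1 : β 1 = α 1 := by simp [hβ]
  have e2 : β 2 = α 2 := by simp [hβ]
  have e3 : β 3 = α 3 := by simp [hβ]
  have hβsum : ∑ i, β i = N - α 0 := by
    rw [Fin.sum_univ_four] at hα ⊢
    rw [hβ0, e1, e2, e3]
    omega
  have hαβ : α = β + Pi.single 0 (α 0) := by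
    funext i
    by_cases hi : i = 0
    · subst hi
      simp [hβ, Pi.single_eq_same]
    · simp [hβ, hi, Pi.single_eq_of_ne hi]
  rcases Nat.eq_zero_or_pos (α 0) with hk0 | hkpos
  · constructor
    · exact (IsCombo.atom (g := atom E B G)
        (mem_pool_EB (Or.inl rfl) hα hk0 j)).mono one_le_3pow
    · exact (IsCombo.atom (g := atom E B G)
        (mem_pool_EB (Or.inr rfl) hα hk0 j)).mono one_le_3pow
  · obtain ⟨k', hk'⟩ := Nat.exists_eq_succ_of_ne_zero (Nat.pos_iff_ne_zero.mp hkpos)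
    have hatoms : ∀ p ∈ pool (α 0),
        IsCombo (pool N) (atom E B G) 1 (mderiv β (atom E B G p)) := by
      rintro ⟨a, γ, j'⟩ hp
      have hmm : mderiv β (atom E B G (a, γ, j')) = atom E B G (a, β + γ, j') :=
        mderiv_mderiv (fld_smooth hEs hBs hGs a j') β γ
      rw [hmm]
      rcases mem_pool_elim hp with ⟨ha, hsum, h0⟩ | ⟨ha, hsum⟩
      · have hsum' : ∑ i, γ i = α 0 := hsum
        have h0' : γ 0 = 0 := h0
        refine IsCombo.atom (mem_pool_EB ha ?_ ?_ j')
        · rw [show ∑ i, (β + γ : Fin 4 → ℕ) i = (∑ i, β i) + ∑ i, γ i from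
            Finset.sum_add_distrib, hβsum, hsum']
          omega
        · show β 0 + γ 0 = 0
          rw [h0', hβ0]
      · have hsum' : ∑ i, γ i = α 0 - 1 := hsum
        simp only at ha
        subst ha
        refine IsCombo.atom (mem_pool_G ?_ j')
        rw [show ∑ i, (β + γ : Fin 4 → ℕ) i = (∑ i, β i) + ∑ i, γ i from
          Finset.sum_add_distrib, hβsum, hsum']
        omega
    have expand : ∀ (h : ∀ j'' : Fin 3, ContDiff ℝ (⊤ : ℕ∞) (fun z => E z j'')) (F : (Fin 4 → ℝ) → Fin 3 → ℝ)
        (hFs : ∀ j'' : Fin 3, ContDiff ℝ (⊤ : ℕ∞) (fun z => F z j''))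
        (c : (Fin 3 × (Fin 4 → ℕ) × Fin 3) → ℝ),
        (∀ z, pdIter 0 (α 0) (fun z => F z j) z = ∑ p ∈ pool (α 0), c p * atom E B G p z) →
        ∀ z, mderiv α (fun z => F z j) z
          = ∑ p ∈ pool (α 0), c p * mderiv β (atom E B G p) z := by
      intro _ F hFs c he z
      have hd : mderiv α (fun z => F z j) = mderiv β (pdIter 0 (α 0) (fun z => F z j)) := by
        conv_lhs => rw [hαβ]
        rw [← mderiv_mderiv (hFs j) β (Pi.single 0 (α 0)), mderiv_single0]
      rw [hd, funext he, mderiv_sum (pool (α 0)) (fun p => fun z => c p * atom E B G p z)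
        (fun p _ => contDiff_const.mul (atom_smooth hEs hBs hGs p)) β]
      refine Finset.sum_congr rfl fun p _ => ?_
      rw [mderiv_const_mul (c p) (atom E B G p) (atom_smooth hEs hBs hGs p) β]
    have mass : ∀ c : (Fin 3 × (Fin 4 → ℕ) × Fin 3) → ℝ,
        (∑ p ∈ pool (α 0), |c p|) ≤ 3 ^ (α 0) →
        (∑ p ∈ pool (α 0), |c p| * 1) ≤ 3 ^ N := by
      intro c hc
      simp only [mul_one]
      exact hc.trans (pow_le_pow_right₀ (by norm_num) hkN)
    constructor
    · obtain ⟨c, hc, he⟩ := (key hEs hBs hGs heq1 heq2 k' j).1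
      have hk2 : k' + 1 = α 0 := by omega
      rw [hk2] at hc he
      exact (IsCombo.of_sum (M := fun _ => (1:ℝ)) hatoms
        (expand hEs E hEs c he)).mono (mass c hc)
    · obtain ⟨c, hc, he⟩ := (key hEs hBs hGs heq1 heq2 k' j).2
      have hk2 : k' + 1 = α 0 := by omega
      rw [hk2] at hc he
      exact (IsCombo.of_sum (M := fun _ => (1:ℝ)) hatoms
        (expand hEs B hBs c he)).mono (mass c hc)

end key

end Stmt19Aux

open Stmt19Aux in
/-- Replacement of time derivatives of the electromagnetic field by spatial derivatives:
if `∂ₜE − ∇×B = −G` and `∂ₜB + ∇×E = 0` hold everywhere for smooth fields with all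
space-time derivatives up to order `N` spatially `L²`, then for every `N ≥ 1` there is
`C = C(N) > 0` such that for all `t ≥ 0`
`Σ_{|α|=N} (‖∂^αE(t)‖² + ‖∂^αB(t)‖²)
  ≤ C Σ_{|α'|=N−1} ‖∂^{α'}G(t)‖²
    + C Σ_{|α|=N, α₀=0} (‖∂^αE(t)‖² + ‖∂^αB(t)‖²)`. -/
theorem stmt_19 (N : ℕ) (hN : 1 ≤ N) :
    ∃ C : ℝ, 0 < C ∧
      ∀ E B G : (Fin 4 → ℝ) → Fin 3 → ℝ,
        (∀ j : Fin 3, ContDiff ℝ (⊤ : ℕ∞) (fun z => E z j)) →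
        (∀ j : Fin 3, ContDiff ℝ (⊤ : ℕ∞) (fun z => B z j)) →
        (∀ j : Fin 3, ContDiff ℝ (⊤ : ℕ∞) (fun z => G z j)) →
        (∀ α : Fin 4 → ℕ, (∑ i, α i) ≤ N → ∀ t : ℝ, ∀ j : Fin 3,
          MemLp (fun x : Fin 3 → ℝ => mderiv α (fun z => E z j) (Fin.cons t x)) 2
            (volume : Measure (Fin 3 → ℝ)) ∧
          MemLp (fun x : Fin 3 → ℝ => mderiv α (fun z => B z j) (Fin.cons t x)) 2
            (volume : Measure (Fin 3 → ℝ)) ∧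
          MemLp (fun x : Fin 3 → ℝ => mderiv α (fun z => G z j) (Fin.cons t x)) 2
            (volume : Measure (Fin 3 → ℝ))) →
        (∀ z : Fin 4 → ℝ, ∀ j : Fin 3,
          pd 0 (fun w => E w j) z - curl3 B z j = -(G z j)) →
        (∀ z : Fin 4 → ℝ, ∀ j : Fin 3,
          pd 0 (fun w => B w j) z + curl3 E z j = 0) →
        ∀ t : ℝ, 0 ≤ t →
          (∑ α ∈ Finset.Nat.antidiagonalTuple 4 N,
            ∫ x : Fin 3 → ℝ, ∑ j : Fin 3,
              ((mderiv α (fun z => E z j) (Fin.cons t x)) ^ 2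
                + (mderiv α (fun z => B z j) (Fin.cons t x)) ^ 2))
          ≤ C * (∑ α ∈ Finset.Nat.antidiagonalTuple 4 (N - 1),
                ∫ x : Fin 3 → ℝ, ∑ j : Fin 3,
                  (mderiv α (fun z => G z j) (Fin.cons t x)) ^ 2)
            + C * (∑ α ∈ (Finset.Nat.antidiagonalTuple 4 N).filter (fun α => α 0 = 0),
                ∫ x : Fin 3 → ℝ, ∑ j : Fin 3,
                  ((mderiv α (fun z => E z j) (Fin.cons t x)) ^ 2
                    + (mderiv α (fun z => B z j) (Fin.cons t x)) ^ 2)) := by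
  set K : ℝ := ((Finset.Nat.antidiagonalTuple 4 N).card : ℝ) * 6 * (3 ^ N * 3 ^ N) with hK
  have hKnn : 0 ≤ K := by positivity
  refine ⟨K + 1, by positivity, ?_⟩
  intro E B G hEs hBs hGs hL2 heq1 heq2 t ht
  -- square-integrability of the atoms on the time slice
  have hatomL2 : ∀ p ∈ pool N,
      MemLp (fun x : Fin 3 → ℝ => atom E B G p (Fin.cons t x)) 2
        (volume : Measure (Fin 3 → ℝ)) := by
    rintro ⟨a, γ, j'⟩ hp
    have hord : (∑ i, γ i) ≤ N := by
      rcases mem_pool_elim hp with ⟨_, h, _⟩ | ⟨_, h⟩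
      · exact le_of_eq h
      · have h' : ∑ i, γ i = N - 1 := h
        omega
    have h3 := hL2 γ hord t j'
    rcases mem_pool_elim hp with ⟨ha, _, _⟩ | ⟨ha, _⟩
    · rcases ha with ha | ha
      · have ha' : a = 0 := ha
        subst ha'
        exact h3.1
      · have ha' : a = 1 := ha
        subst ha'
        exact h3.2.1
    · have ha' : a = 2 := ha
      subst ha'
      exact h3.2.2
  -- integrability of the individual squares
  have hintE : ∀ γ : Fin 4 → ℕ, (∑ i, γ i) ≤ N → ∀ j : Fin 3,
      Integrable (fun x : Fin 3 → ℝ => (mderiv γ (fun z => E z j) (Fin.cons t x)) ^ 2)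
        (volume : Measure (Fin 3 → ℝ)) := fun γ hγ j => ((hL2 γ hγ t j).1).integrable_sq
  have hintB : ∀ γ : Fin 4 → ℕ, (∑ i, γ i) ≤ N → ∀ j : Fin 3,
      Integrable (fun x : Fin 3 → ℝ => (mderiv γ (fun z => B z j) (Fin.cons t x)) ^ 2)
        (volume : Measure (Fin 3 → ℝ)) := fun γ hγ j => ((hL2 γ hγ t j).2.1).integrable_sq
  have hintG : ∀ γ : Fin 4 → ℕ, (∑ i, γ i) ≤ N → ∀ j : Fin 3,
      Integrable (fun x : Fin 3 → ℝ => (mderiv γ (fun z => G z j) (Fin.cons t x)) ^ 2)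
        (volume : Measure (Fin 3 → ℝ)) := fun γ hγ j => ((hL2 γ hγ t j).2.2).integrable_sq
  -- the total atom mass
  set T : ℝ := ∑ p ∈ pool N,
      ∫ x : Fin 3 → ℝ, (atom E B G p (Fin.cons t x)) ^ 2 with hT
  have hTnn : 0 ≤ T :=
    Finset.sum_nonneg fun p _ => integral_nonneg fun x => sq_nonneg _
  -- per-derivative bounds
  have hbound : ∀ α ∈ Finset.Nat.antidiagonalTuple 4 N, ∀ j : Fin 3,
      (∫ x : Fin 3 → ℝ, (mderiv α (fun z => E z j) (Fin.cons t x)) ^ 2)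
        ≤ 3 ^ N * 3 ^ N * T ∧
      (∫ x : Fin 3 → ℝ, (mderiv α (fun z => B z j) (Fin.cons t x)) ^ 2)
        ≤ 3 ^ N * 3 ^ N * T := by
    intro α hα j
    have hαsum : (∑ i, α i) = N := Finset.Nat.mem_antidiagonalTuple.1 hα
    obtain ⟨hcE, hcB⟩ := main_combo hEs hBs hGs heq1 heq2 N hN α hαsum j
    constructor
    · exact combo_sq_integral hcE (by positivity) t (hL2 α (le_of_eq hαsum) t j).1 hatomL2
    · exact combo_sq_integral hcB (by positivity) t (hL2 α (le_of_eq hαsum) t j).2.1 hatomL2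
  -- rewrite the left-hand side
  have hLHS : (∑ α ∈ Finset.Nat.antidiagonalTuple 4 N,
      ∫ x : Fin 3 → ℝ, ∑ j : Fin 3,
        ((mderiv α (fun z => E z j) (Fin.cons t x)) ^ 2
          + (mderiv α (fun z => B z j) (Fin.cons t x)) ^ 2))
      = ∑ α ∈ Finset.Nat.antidiagonalTuple 4 N, ∑ j : Fin 3,
        ((∫ x : Fin 3 → ℝ, (mderiv α (fun z => E z j) (Fin.cons t x)) ^ 2)
          + ∫ x : Fin 3 → ℝ, (mderiv α (fun z => B z j) (Fin.cons t x)) ^ 2) := by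
    refine Finset.sum_congr rfl fun α hα => ?_
    have hαsum : (∑ i, α i) ≤ N := le_of_eq (Finset.Nat.mem_antidiagonalTuple.1 hα)
    exact (integral_finset_sum Finset.univ
      (fun j _ => (hintE α hαsum j).add (hintB α hαsum j))).trans
      (Finset.sum_congr rfl fun j _ => integral_add (hintE α hαsum j) (hintB α hαsum j))
  -- S and G parts of T
  set TS : ℝ := ∑ γ ∈ (Finset.Nat.antidiagonalTuple 4 N).filter (fun γ => γ 0 = 0),
      ∑ j : Fin 3,
        ((∫ x : Fin 3 → ℝ, (mderiv γ (fun z => E z j) (Fin.cons t x)) ^ 2)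
          + ∫ x : Fin 3 → ℝ, (mderiv γ (fun z => B z j) (Fin.cons t x)) ^ 2) with hTS
  set TG : ℝ := ∑ γ ∈ Finset.Nat.antidiagonalTuple 4 (N - 1),
      ∑ j : Fin 3, ∫ x : Fin 3 → ℝ, (mderiv γ (fun z => G z j) (Fin.cons t x)) ^ 2 with hTG
  have hdisj : Disjoint
      (({0, 1} : Finset (Fin 3)) ×ˢ
        (((Finset.Nat.antidiagonalTuple 4 N).filter fun γ => γ 0 = 0) ×ˢ
          (Finset.univ : Finset (Fin 3))))
      (({2} : Finset (Fin 3)) ×ˢ ((Finset.Nat.antidiagonalTuple 4 (N - 1)) ×ˢ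
        (Finset.univ : Finset (Fin 3)))) := by
    rw [Finset.disjoint_left]
    rintro ⟨a, γ, j⟩ h1 h2
    rw [Finset.mem_product] at h1 h2
    have ha1 : a ∈ ({0, 1} : Finset (Fin 3)) := h1.1
    have ha2 : a ∈ ({2} : Finset (Fin 3)) := h2.1
    fin_cases ha1 <;> simp_all
  have hTsplit : T = TS + TG := by
    rw [hT, pool, Finset.sum_union hdisj]
    congr 1
    · rw [Finset.sum_product]
      rw [show ({0, 1} : Finset (Fin 3)) = insert 0 {1} from rfl, Finset.sum_insert (by decide),
        Finset.sum_singleton, Finset.sum_product, Finset.sum_product, hTS,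
        ← Finset.sum_add_distrib]
      refine Finset.sum_congr rfl fun γ hγ => ?_
      rw [← Finset.sum_add_distrib]
      rfl
    · rw [Finset.sum_product, Finset.sum_singleton, hTG, Finset.sum_product]
      rfl
  -- rewrite the right-hand side sums
  have hRG : (∑ α ∈ Finset.Nat.antidiagonalTuple 4 (N - 1),
      ∫ x : Fin 3 → ℝ, ∑ j : Fin 3, (mderiv α (fun z => G z j) (Fin.cons t x)) ^ 2) = TG := by
    rw [hTG]
    refine Finset.sum_congr rfl fun γ hγ => ?_
    have hγsum : (∑ i, γ i) ≤ N := by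
      have := Finset.Nat.mem_antidiagonalTuple.1 hγ
      omega
    exact integral_finset_sum Finset.univ (fun j _ => hintG γ hγsum j)
  have hRS : (∑ α ∈ (Finset.Nat.antidiagonalTuple 4 N).filter (fun α => α 0 = 0),
      ∫ x : Fin 3 → ℝ, ∑ j : Fin 3,
        ((mderiv α (fun z => E z j) (Fin.cons t x)) ^ 2
          + (mderiv α (fun z => B z j) (Fin.cons t x)) ^ 2)) = TS := by
    rw [hTS]
    refine Finset.sum_congr rfl fun γ hγ => ?_
    have hγsum : (∑ i, γ i) ≤ N :=
      le_of_eq (Finset.Nat.mem_antidiagonalTuple.1 (Finset.mem_filter.1 hγ).1)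
    exact (integral_finset_sum Finset.univ
      (fun j _ => (hintE γ hγsum j).add (hintB γ hγsum j))).trans
      (Finset.sum_congr rfl fun j _ => integral_add (hintE γ hγsum j) (hintB γ hγsum j))
  have hTSnn : 0 ≤ TS := by
    rw [← hRS]
    refine Finset.sum_nonneg fun γ _ => integral_nonneg fun x => ?_
    exact Finset.sum_nonneg fun j _ => add_nonneg (sq_nonneg _) (sq_nonneg _)
  have hTGnn : 0 ≤ TG := by
    rw [← hRG]
    refine Finset.sum_nonneg fun γ _ => integral_nonneg fun x => ?_
    exact Finset.sum_nonneg fun j _ => sq_nonneg _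
  rw [hLHS, hRG, hRS]
  calc (∑ α ∈ Finset.Nat.antidiagonalTuple 4 N, ∑ j : Fin 3,
        ((∫ x : Fin 3 → ℝ, (mderiv α (fun z => E z j) (Fin.cons t x)) ^ 2)
          + ∫ x : Fin 3 → ℝ, (mderiv α (fun z => B z j) (Fin.cons t x)) ^ 2))
      ≤ ∑ α ∈ Finset.Nat.antidiagonalTuple 4 N, ∑ j : Fin 3,
          (3 ^ N * 3 ^ N * T + 3 ^ N * 3 ^ N * T) := by
        refine Finset.sum_le_sum fun α hα => Finset.sum_le_sum fun j _ => ?_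
        exact add_le_add (hbound α hα j).1 (hbound α hα j).2
    _ = K * T := by
        rw [Finset.sum_const, Finset.sum_const, hK]
        simp only [Finset.card_univ, Fintype.card_fin, nsmul_eq_mul]
        ring
    _ = K * TS + K * TG := by rw [hTsplit]; ring
    _ ≤ (K + 1) * TG + (K + 1) * TS := by nlinarith

end
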